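/- Suppose the limiting system (ODE-Λ) has a solution (Λ₁, Λ₂) on [0, T], let (S, r) solve (ODE-Sr), and define Θ, Θ₁, Θ₂ from (Λ₁, Λ₂, S), together with Z₀ = −B₀(Θ + Θ₁), Z₁ = A + G − B(Θ + Θ₁), Θ̂ = I_N ⊗ Θ and Θ̂₁ = 𝟏_{N×1} ⊗ Θ₁. Let 𝐏̌₁ be the unique solution of (ODE-P̌₁). Then the linear terminal value problem (ODE-P̌₁₂): −d𝐏̌₁₂/dt = Θ̂ᵀ(𝐑 + 𝓜₂(2𝐏̌₁))Θ̂₁ − 𝐏̌₁𝐁̂Θ̂₁ + (𝐀ᵀ − Θ̂ᵀ𝐁̂ᵀ)𝐏̌₁₂ + 𝐏̌₁₂Z₁ − Θ̂ᵀÎᵀ𝐁₀ᵀ𝐏̌₁₂Z₀ on [0,T], 𝐏̌₁₂(T) = 0, for 𝐏̌₁₂ : [0,T] → ℝ^{Nn×n}, has a unique solution, and there exists Π̌₁₂^N : [0,T] → ℝ^{n×n} such that 𝐏̌₁₂(t) = (Π̌₁₂^N(t)ᵀ, …, Π̌₁₂^N(t)ᵀ)ᵀ, i.e., all N of its n×n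 blocks are equal, for every t ∈ [0,T]. -/

import Mathlib

open Matrix Set

namespace LQ

/-- Frobenius norm of a real matrix. -/
noncomputable def frob {a b : Type*} [Fintype a] [Fintype b] (M : Matrix a b ℝ) : ℝ :=
  Real.sqrt (∑ i, ∑ j, (M i j) ^ 2)

/-- Entrywise ℓ₁ norm of a real matrix. -/
noncomputable def l1norm {a b : Type*} [Fintype a] [Fintype b] (M : Matrix a b ℝ) : ℝ :=
  ∑ i, ∑ j, |M i j|

/-- Block matrix with all diagonal m×m blocks equal to `F` and all off-diagonal blocks equal to `K`. -/
def blockConst (N m : ℕ) (F K : Matrix (Fin m) (Fin m) ℝ) :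
    Matrix (Fin N × Fin m) (Fin N × Fin m) ℝ :=
  Matrix.of fun x y => if x.1 = y.1 then F x.2 y.2 else K x.2 y.2

/-- Block matrix with diagonal blocks `Λ₁` and off-diagonal blocks `Λ₂ / N`. -/
noncomputable def blockPN (N n : ℕ) (Λ₁ Λ₂ : Matrix (Fin n) (Fin n) ℝ) :
    Matrix (Fin N × Fin n) (Fin N × Fin n) ℝ :=
  Matrix.of fun x y => if x.1 = y.1 then Λ₁ x.2 y.2 else Λ₂ x.2 y.2 / (N : ℝ)

/-- The permutation matrix exchanging the i-th and j-th block rows of `I_{Nn}`. -/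
def Jswap (N n : ℕ) (i j : Fin N) : Matrix (Fin N × Fin n) (Fin N × Fin n) ℝ :=
  Matrix.of fun x y => if y.1 = Equiv.swap i j x.1 ∧ y.2 = x.2 then 1 else 0

/-- `I_N ⊗ M`. -/
def kronIN (N : ℕ) {a b : ℕ} (M : Matrix (Fin a) (Fin b) ℝ) :
    Matrix (Fin N × Fin a) (Fin N × Fin b) ℝ :=
  Matrix.of fun x y => if x.1 = y.1 then M x.2 y.2 else 0

/-- `𝟏_{N×1} ⊗ M`. -/
def stackN (N : ℕ) {a b : ℕ} (M : Matrix (Fin a) (Fin b) ℝ) :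
    Matrix (Fin N × Fin a) (Fin b) ℝ :=
  Matrix.of fun x y => M x.2 y

/-- Data of the LQ mean field social optimization problem. -/
structure Params (n n₁ : ℕ) where
  A : Matrix (Fin n) (Fin n) ℝ
  G : Matrix (Fin n) (Fin n) ℝ
  Γ : Matrix (Fin n) (Fin n) ℝ
  Γf : Matrix (Fin n) (Fin n) ℝ
  B : Matrix (Fin n) (Fin n₁) ℝ
  B0 : Matrix (Fin n) (Fin n₁) ℝ
  B1 : Matrix (Fin n) (Fin n₁) ℝ
  D : Matrix (Fin n) (Fin 1) ℝ
  D0 : Matrix (Fin n) (Fin 1) ℝ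
  Q : Matrix (Fin n) (Fin n) ℝ
  Qf : Matrix (Fin n) (Fin n) ℝ
  R : Matrix (Fin n₁) (Fin n₁) ℝ
  T : ℝ

namespace Params

variable {n n₁ : ℕ} (p : Params n n₁)

/-- Standing hypotheses: positive dimensions, positive horizon, symmetric weights. -/
def Standing : Prop :=
  1 ≤ n ∧ 1 ≤ n₁ ∧ 0 < p.T ∧ p.Q.IsSymm ∧ p.Qf.IsSymm ∧ p.R.IsSymm

/-- Q^Γ = Γᵀ Q Γ − Q Γ − Γᵀ Q. -/
def QΓ : Matrix (Fin n) (Fin n) ℝ := p.Γᵀ * p.Q * p.Γ - p.Q * p.Γ - p.Γᵀ * p.Q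

/-- Q_f^Γ = Γ_fᵀ Q_f Γ_f − Q_f Γ_f − Γ_fᵀ Q_f. -/
def QfΓ : Matrix (Fin n) (Fin n) ℝ := p.Γfᵀ * p.Qf * p.Γf - p.Qf * p.Γf - p.Γfᵀ * p.Qf

/-- ℛ₁(Λ₁) = R + B₁ᵀ Λ₁ B₁. -/
def R1 (Λ₁ : Matrix (Fin n) (Fin n) ℝ) : Matrix (Fin n₁) (Fin n₁) ℝ :=
  p.R + p.B1ᵀ * Λ₁ * p.B1

/-- ℛ₂(Λ₁,Λ₂) = R + B₁ᵀ Λ₁ B₁ + B₀ᵀ(Λ₁+Λ₂)B₀. -/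
def R2 (Λ₁ Λ₂ : Matrix (Fin n) (Fin n) ℝ) : Matrix (Fin n₁) (Fin n₁) ℝ :=
  p.R + p.B1ᵀ * Λ₁ * p.B1 + p.B0ᵀ * (Λ₁ + Λ₂) * p.B0

/-- Ψ₁. -/
noncomputable def Ψ₁ (Λ₁ : Matrix (Fin n) (Fin n) ℝ) : Matrix (Fin n) (Fin n) ℝ :=
  Λ₁ * p.B * (p.R1 Λ₁)⁻¹ * p.Bᵀ * Λ₁ - Λ₁ * p.A - p.Aᵀ * Λ₁ - p.Q

/-- Ψ₂. -/
noncomputable def Ψ₂ (Λ₁ Λ₂ : Matrix (Fin n) (Fin n) ℝ) : Matrix (Fin n) (Fin n) ℝ :=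
  (Λ₁ + Λ₂) * p.B * (p.R2 Λ₁ Λ₂)⁻¹ * p.Bᵀ * (Λ₁ + Λ₂)
    - Λ₁ * p.B * (p.R1 Λ₁)⁻¹ * p.Bᵀ * Λ₁
    - (Λ₁ * p.G + Λ₂ * (p.A + p.G))
    - (p.Gᵀ * Λ₁ + (p.Aᵀ + p.Gᵀ) * Λ₂)
    - p.QΓ

/-- Solution of the limiting ODE system (ODE-Λ) on [0,T]. -/
noncomputable def IsSolLim (Λ₁ Λ₂ : ℝ → Matrix (Fin n) (Fin n) ℝ) : Prop :=
  (∀ t ∈ Icc (0 : ℝ) p.T, (Λ₁ t).IsSymm ∧ (Λ₂ t).IsSymm) ∧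
  (∀ t ∈ Icc (0 : ℝ) p.T, (p.R1 (Λ₁ t)).PosDef ∧ (p.R2 (Λ₁ t) (Λ₂ t)).PosDef) ∧
  Λ₁ p.T = p.Qf ∧ Λ₂ p.T = p.QfΓ ∧
  (∀ t ∈ Icc (0 : ℝ) p.T, ∀ i j, HasDerivWithinAt (fun s => Λ₁ s i j)
    (p.Ψ₁ (Λ₁ t) i j) (Icc (0 : ℝ) p.T) t) ∧
  (∀ t ∈ Icc (0 : ℝ) p.T, ∀ i j, HasDerivWithinAt (fun s => Λ₂ s i j)
    (p.Ψ₂ (Λ₁ t) (Λ₂ t) i j) (Icc (0 : ℝ) p.T) t)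

/-! Big (N-agent) matrices. -/

noncomputable def bigA (N : ℕ) : Matrix (Fin N × Fin n) (Fin N × Fin n) ℝ :=
  Matrix.of fun x y => (if x.1 = y.1 then p.A x.2 y.2 else 0) + p.G x.2 y.2 / (N : ℝ)

def bigBhat (N : ℕ) : Matrix (Fin N × Fin n) (Fin N × Fin n₁) ℝ :=
  Matrix.of fun x y => if x.1 = y.1 then p.B x.2 y.2 else 0

def bigB (N : ℕ) (i : Fin N) : Matrix (Fin N × Fin n) (Fin n₁) ℝ :=
  Matrix.of fun x l => if x.1 = i then p.B1 x.2 l else 0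

noncomputable def bigB0 (N : ℕ) : Matrix (Fin N × Fin n) (Fin n₁) ℝ :=
  Matrix.of fun x l => p.B0 x.2 l / (N : ℝ)

def bigD (N : ℕ) (i : Fin N) : Matrix (Fin N × Fin n) (Fin 1) ℝ :=
  Matrix.of fun x l => if x.1 = i then p.D x.2 l else 0

def bigD0 (N : ℕ) : Matrix (Fin N × Fin n) (Fin 1) ℝ :=
  Matrix.of fun x l => p.D0 x.2 l

def bigE (_p : Params n n₁) (N : ℕ) (i : Fin N) : Matrix (Fin n₁) (Fin N × Fin n₁) ℝ :=
  Matrix.of fun k y => if y.1 = i ∧ y.2 = k then 1 else 0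

def bigIhat (_p : Params n n₁) (N : ℕ) : Matrix (Fin n₁) (Fin N × Fin n₁) ℝ :=
  Matrix.of fun k y => if y.2 = k then 1 else 0

noncomputable def bigQ (N : ℕ) : Matrix (Fin N × Fin n) (Fin N × Fin n) ℝ :=
  Matrix.of fun x y => (if x.1 = y.1 then p.Q x.2 y.2 else 0) + p.QΓ x.2 y.2 / (N : ℝ)

noncomputable def bigQf (N : ℕ) : Matrix (Fin N × Fin n) (Fin N × Fin n) ℝ :=
  Matrix.of fun x y => (if x.1 = y.1 then p.Qf x.2 y.2 else 0) + p.QfΓ x.2 y.2 / (N : ℝ)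

def bigR (N : ℕ) : Matrix (Fin N × Fin n₁) (Fin N × Fin n₁) ℝ :=
  Matrix.of fun x y => if x.1 = y.1 then p.R x.2 y.2 else 0

/-- 𝓜₀. -/
noncomputable def M0 (N : ℕ) (Z : Matrix (Fin N × Fin n) (Fin N × Fin n) ℝ) :
    Matrix (Fin 1) (Fin 1) ℝ :=
  (1 / 2 : ℝ) • (∑ i : Fin N, (p.bigD N i)ᵀ * Z * p.bigD N i)
    + (1 / 2 : ℝ) • ((p.bigD0 N)ᵀ * Z * p.bigD0 N)

/-- 𝓜₁. -/
noncomputable def M1 (N : ℕ) (Z : Matrix (Fin N × Fin n) (Fin N × Fin n) ℝ) :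
    Matrix (Fin 1) (Fin N × Fin n₁) ℝ :=
  (∑ i : Fin N, (p.bigD N i)ᵀ * Z * p.bigB N i * p.bigE N i)
    + (p.bigD0 N)ᵀ * Z * p.bigB0 N * p.bigIhat N

/-- 𝓜₂. -/
noncomputable def M2 (N : ℕ) (Z : Matrix (Fin N × Fin n) (Fin N × Fin n) ℝ) :
    Matrix (Fin N × Fin n₁) (Fin N × Fin n₁) ℝ :=
  (1 / 2 : ℝ) • (∑ i : Fin N, (p.bigE N i)ᵀ * (p.bigB N i)ᵀ * Z * p.bigB N i * p.bigE N i)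
    + (1 / 2 : ℝ) • ((p.bigIhat N)ᵀ * (p.bigB0 N)ᵀ * Z * p.bigB0 N * p.bigIhat N)

/-- Right-hand side of the Riccati equation (ODE-P). -/
noncomputable def PRic (N : ℕ) (P : Matrix (Fin N × Fin n) (Fin N × Fin n) ℝ) :
    Matrix (Fin N × Fin n) (Fin N × Fin n) ℝ :=
  P * p.bigBhat N * (p.bigR N + (2 : ℝ) • p.M2 N P)⁻¹ * (p.bigBhat N)ᵀ * P
    - P * p.bigA N - (p.bigA N)ᵀ * P - p.bigQ N

/-- Solution of the large-scale Riccati equation (ODE-P) on [0,T]. -/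
noncomputable def IsSolP (N : ℕ) (P : ℝ → Matrix (Fin N × Fin n) (Fin N × Fin n) ℝ) : Prop :=
  (∀ t ∈ Icc (0 : ℝ) p.T, (P t).IsSymm) ∧
  (∀ t ∈ Icc (0 : ℝ) p.T, (p.bigR N + (2 : ℝ) • p.M2 N (P t)).PosDef) ∧
  P p.T = p.bigQf N ∧
  (∀ t ∈ Icc (0 : ℝ) p.T, ∀ x y, HasDerivWithinAt (fun s => P s x y)
    (p.PRic N (P t) x y) (Icc (0 : ℝ) p.T) t)

/-- Solution of the companion linear equation (ODE-S) on [0,T], relative to `P`. -/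
noncomputable def IsSolS (N : ℕ) (P : ℝ → Matrix (Fin N × Fin n) (Fin N × Fin n) ℝ)
    (S : ℝ → Matrix (Fin N × Fin n) (Fin 1) ℝ) : Prop :=
  S p.T = 0 ∧
  (∀ t ∈ Icc (0 : ℝ) p.T, ∀ x y, HasDerivWithinAt (fun s => S s x y)
    ((P t * p.bigBhat N * (p.bigR N + (2 : ℝ) • p.M2 N (P t))⁻¹ *
        ((p.bigBhat N)ᵀ * S t + (p.M1 N (P t))ᵀ) - (p.bigA N)ᵀ * S t) x y)
    (Icc (0 : ℝ) p.T) t)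

/-- Solution of the companion scalar equation (ODE-r) on [0,T], relative to `P` and `S`. -/
noncomputable def IsSolr (N : ℕ) (P : ℝ → Matrix (Fin N × Fin n) (Fin N × Fin n) ℝ)
    (S : ℝ → Matrix (Fin N × Fin n) (Fin 1) ℝ) (r : ℝ → ℝ) : Prop :=
  r p.T = 0 ∧
  (∀ t ∈ Icc (0 : ℝ) p.T, HasDerivWithinAt r
    (((((S t)ᵀ * p.bigBhat N + p.M1 N (P t)) * (p.bigR N + (2 : ℝ) • p.M2 N (P t))⁻¹ *
        ((p.bigBhat N)ᵀ * S t + (p.M1 N (P t))ᵀ)) - (2 : ℝ) • p.M0 N (P t)) 0 0)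
    (Icc (0 : ℝ) p.T) t)

/-- Asymptotic solvability of the LQ mean field social optimization problem. -/
noncomputable def AsympSolvable : Prop :=
  ∃ N₀ : ℕ, 1 ≤ N₀ ∧ ∃ c₀ : ℝ, 0 < c₀ ∧ ∃ C : ℝ,
    ∀ N : ℕ, N₀ ≤ N →
      ∃ P : ℝ → Matrix (Fin N × Fin n) (Fin N × Fin n) ℝ,
        p.IsSolP N P ∧
        (∀ t ∈ Icc (0 : ℝ) p.T, l1norm (P t) / (N : ℝ) ≤ C) ∧
        (∀ t ∈ Icc (0 : ℝ) p.T,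
          (p.bigR N + (2 : ℝ) • p.M2 N (P t) - c₀ • 1).PosSemidef)

/-! The rescaled low-dimensional system. -/

/-- E^N. -/
noncomputable def EN (N : ℕ) (Λ₁ Λ₂ : Matrix (Fin n) (Fin n) ℝ) :
    Matrix (Fin n₁) (Fin n₁) ℝ :=
  (1 / (N : ℝ)) •
    ((p.R2 Λ₁ Λ₂ - (1 / (N : ℝ)) • (p.B0ᵀ * Λ₂ * p.B0))⁻¹ - (p.R1 Λ₁)⁻¹)

/-- H^N. -/
noncomputable def HN (N : ℕ) (Λ₁ Λ₂ : Matrix (Fin n) (Fin n) ℝ) :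
    Matrix (Fin n₁) (Fin n₁) ℝ :=
  p.EN N Λ₁ Λ₂ + (p.R1 Λ₁)⁻¹

/-- g₁. -/
noncomputable def g₁ (N : ℕ) (Λ₁ Λ₂ : Matrix (Fin n) (Fin n) ℝ) :
    Matrix (Fin n) (Fin n) ℝ :=
  Λ₁ * p.B * p.EN N Λ₁ Λ₂ * p.Bᵀ * Λ₁
  + (1 - 1 / (N : ℝ)) •
      (Λ₂ * p.B * p.EN N Λ₁ Λ₂ * p.Bᵀ * Λ₁ + Λ₁ * p.B * p.EN N Λ₁ Λ₂ * p.Bᵀ * Λ₂)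
  + (1 / (N : ℝ) - 1 / (N : ℝ) ^ 2) •
      (Λ₂ * p.B * (p.HN N Λ₁ Λ₂ + ((N : ℝ) - 2) • p.EN N Λ₁ Λ₂) * p.Bᵀ * Λ₂)
  - (1 / (N : ℝ)) •
      ((Λ₁ * p.G + p.Gᵀ * Λ₁) + (1 - 1 / (N : ℝ)) • (Λ₂ * p.G + p.Gᵀ * Λ₂))
  - (1 / (N : ℝ)) • p.QΓ

/-- g₂. -/
noncomputable def g₂ (N : ℕ) (Λ₁ Λ₂ : Matrix (Fin n) (Fin n) ℝ) :
    Matrix (Fin n) (Fin n) ℝ :=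
  (Λ₁ + Λ₂) * p.B *
      ((N : ℝ) • p.EN N Λ₁ Λ₂ + (p.R1 Λ₁)⁻¹ - (p.R2 Λ₁ Λ₂)⁻¹) * p.Bᵀ * (Λ₁ + Λ₂)
  - (2 / (N : ℝ)) • (Λ₂ * p.B * (p.R1 Λ₁)⁻¹ * p.Bᵀ * Λ₂)
  + (1 / (N : ℝ) - 2) • (Λ₂ * p.B * p.EN N Λ₁ Λ₂ * p.Bᵀ * Λ₂)
  - Λ₁ * p.B * p.EN N Λ₁ Λ₂ * p.Bᵀ * Λ₂
  - Λ₂ * p.B * p.EN N Λ₁ Λ₂ * p.Bᵀ * Λ₁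
  + (1 / (N : ℝ)) • (Λ₂ * p.G + p.Gᵀ * Λ₂)

/-- Solution of the rescaled system (ODE-Λ^N) on [0,T]. -/
noncomputable def IsSolLamN (N : ℕ) (Λ₁ Λ₂ : ℝ → Matrix (Fin n) (Fin n) ℝ) : Prop :=
  (∀ t ∈ Icc (0 : ℝ) p.T, (Λ₁ t).IsSymm ∧ (Λ₂ t).IsSymm) ∧
  (∀ t ∈ Icc (0 : ℝ) p.T, (p.R1 (Λ₁ t)).PosDef ∧ (p.R2 (Λ₁ t) (Λ₂ t)).PosDef ∧
    (p.R2 (Λ₁ t) (Λ₂ t) - (1 / (N : ℝ)) • (p.B0ᵀ * Λ₂ t * p.B0)).PosDef) ∧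
  Λ₁ p.T = p.Qf + (1 / (N : ℝ)) • p.QfΓ ∧ Λ₂ p.T = p.QfΓ ∧
  (∀ t ∈ Icc (0 : ℝ) p.T, ∀ i j, HasDerivWithinAt (fun s => Λ₁ s i j)
    ((p.Ψ₁ (Λ₁ t) + p.g₁ N (Λ₁ t) (Λ₂ t)) i j) (Icc (0 : ℝ) p.T) t) ∧
  (∀ t ∈ Icc (0 : ℝ) p.T, ∀ i j, HasDerivWithinAt (fun s => Λ₂ s i j)
    ((p.Ψ₂ (Λ₁ t) (Λ₂ t) + p.g₂ N (Λ₁ t) (Λ₂ t)) i j) (Icc (0 : ℝ) p.T) t)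

/-! Companion (mean-field) equations. -/

/-- φ₁. -/
noncomputable def φ₁ (Λ₁ Λ₂ : Matrix (Fin n) (Fin n) ℝ) (S : Matrix (Fin n) (Fin 1) ℝ) :
    Matrix (Fin n) (Fin 1) ℝ :=
  (Λ₁ + Λ₂) * p.B * (p.R2 Λ₁ Λ₂)⁻¹ *
      (p.Bᵀ * S + p.B1ᵀ * Λ₁ * p.D + p.B0ᵀ * (Λ₁ + Λ₂) * p.D0)
    - (p.A + p.G)ᵀ * S

/-- φ₂. -/
noncomputable def φ₂ (Λ₁ Λ₂ : Matrix (Fin n) (Fin n) ℝ) (S : Matrix (Fin n) (Fin 1) ℝ) :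
    Matrix (Fin 1) (Fin 1) ℝ :=
  (Sᵀ * p.B + p.Dᵀ * Λ₁ * p.B1 + p.D0ᵀ * (Λ₁ + Λ₂) * p.B0) * (p.R2 Λ₁ Λ₂)⁻¹ *
      (p.Bᵀ * S + p.B1ᵀ * Λ₁ * p.D + p.B0ᵀ * (Λ₁ + Λ₂) * p.D0)
    - p.Dᵀ * Λ₁ * p.D - p.D0ᵀ * (Λ₁ + Λ₂) * p.D0

/-- Solution of the limiting companion system (ODE-Sr) on [0,T]. -/
noncomputable def IsSolSr (Λ₁ Λ₂ : ℝ → Matrix (Fin n) (Fin n) ℝ)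
    (S : ℝ → Matrix (Fin n) (Fin 1) ℝ) (r : ℝ → ℝ) : Prop :=
  S p.T = 0 ∧ r p.T = 0 ∧
  (∀ t ∈ Icc (0 : ℝ) p.T, ∀ i j, HasDerivWithinAt (fun s => S s i j)
    (p.φ₁ (Λ₁ t) (Λ₂ t) (S t) i j) (Icc (0 : ℝ) p.T) t) ∧
  (∀ t ∈ Icc (0 : ℝ) p.T, HasDerivWithinAt r
    ((p.φ₂ (Λ₁ t) (Λ₂ t) (S t)) 0 0) (Icc (0 : ℝ) p.T) t)

/-- g₀₁. -/
noncomputable def g01 (N : ℕ) (Λ₁ Λ₂ : Matrix (Fin n) (Fin n) ℝ)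
    (S : Matrix (Fin n) (Fin 1) ℝ) : Matrix (Fin n) (Fin 1) ℝ :=
  (Λ₁ + (1 - 1 / (N : ℝ)) • Λ₂) * p.B *
      (p.R2 Λ₁ Λ₂ - (1 / (N : ℝ)) • (p.B0ᵀ * Λ₂ * p.B0))⁻¹ *
      (p.Bᵀ * S + p.B1ᵀ * Λ₁ * p.D + p.B0ᵀ * (Λ₁ + (1 - 1 / (N : ℝ)) • Λ₂) * p.D0)
  - (Λ₁ + Λ₂) * p.B * (p.R2 Λ₁ Λ₂)⁻¹ *
      (p.Bᵀ * S + p.B1ᵀ * Λ₁ * p.D + p.B0ᵀ * (Λ₁ + Λ₂) * p.D0)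

/-- g₀₂. -/
noncomputable def g02 (N : ℕ) (Λ₁ Λ₂ : Matrix (Fin n) (Fin n) ℝ)
    (S : Matrix (Fin n) (Fin 1) ℝ) : Matrix (Fin 1) (Fin 1) ℝ :=
  (Sᵀ * p.B + p.Dᵀ * Λ₁ * p.B1 + p.D0ᵀ * (Λ₁ + (1 - 1 / (N : ℝ)) • Λ₂) * p.B0) *
      (p.R2 Λ₁ Λ₂ - (1 / (N : ℝ)) • (p.B0ᵀ * Λ₂ * p.B0))⁻¹ *
      (p.Bᵀ * S + p.B1ᵀ * Λ₁ * p.D + p.B0ᵀ * (Λ₁ + (1 - 1 / (N : ℝ)) • Λ₂) * p.D0)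
  - (Sᵀ * p.B + p.Dᵀ * Λ₁ * p.B1 + p.D0ᵀ * (Λ₁ + Λ₂) * p.B0) * (p.R2 Λ₁ Λ₂)⁻¹ *
      (p.Bᵀ * S + p.B1ᵀ * Λ₁ * p.D + p.B0ᵀ * (Λ₁ + Λ₂) * p.D0)
  + (1 / (N : ℝ)) • (p.D0ᵀ * Λ₂ * p.D0)

/-- Solution of the rescaled companion system (ODE-S^N r^N) on [0,T]. -/
noncomputable def IsSolSrN (N : ℕ) (Λ₁ Λ₂ : ℝ → Matrix (Fin n) (Fin n) ℝ)
    (S : ℝ → Matrix (Fin n) (Fin 1) ℝ) (r : ℝ → ℝ) : Prop :=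
  S p.T = 0 ∧ r p.T = 0 ∧
  (∀ t ∈ Icc (0 : ℝ) p.T, ∀ i j, HasDerivWithinAt (fun s => S s i j)
    ((p.φ₁ (Λ₁ t) (Λ₂ t) (S t) + p.g01 N (Λ₁ t) (Λ₂ t) (S t)) i j) (Icc (0 : ℝ) p.T) t) ∧
  (∀ t ∈ Icc (0 : ℝ) p.T, HasDerivWithinAt r
    ((p.φ₂ (Λ₁ t) (Λ₂ t) (S t) + p.g02 N (Λ₁ t) (Λ₂ t) (S t)) 0 0) (Icc (0 : ℝ) p.T) t)

/-! Feedback gains. -/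

/-- Θ = ℛ₁(Λ₁)⁻¹ Bᵀ Λ₁. -/
noncomputable def Theta (Λ₁ : Matrix (Fin n) (Fin n) ℝ) : Matrix (Fin n₁) (Fin n) ℝ :=
  (p.R1 Λ₁)⁻¹ * p.Bᵀ * Λ₁

/-- Θ₁ = (H₁ − H)Bᵀ(Λ₁+Λ₂) + HBᵀΛ₂. -/
noncomputable def Theta1 (Λ₁ Λ₂ : Matrix (Fin n) (Fin n) ℝ) : Matrix (Fin n₁) (Fin n) ℝ :=
  ((p.R2 Λ₁ Λ₂)⁻¹ - (p.R1 Λ₁)⁻¹) * p.Bᵀ * (Λ₁ + Λ₂) + (p.R1 Λ₁)⁻¹ * p.Bᵀ * Λ₂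

/-- Θ₂ = H₁[BᵀS + B₁ᵀΛ₁D + B₀ᵀ(Λ₁+Λ₂)D₀]. -/
noncomputable def Theta2 (Λ₁ Λ₂ : Matrix (Fin n) (Fin n) ℝ) (S : Matrix (Fin n) (Fin 1) ℝ) :
    Matrix (Fin n₁) (Fin 1) ℝ :=
  (p.R2 Λ₁ Λ₂)⁻¹ * (p.Bᵀ * S + p.B1ᵀ * Λ₁ * p.D + p.B0ᵀ * (Λ₁ + Λ₂) * p.D0)

/-- Θ^N. -/
noncomputable def ThetaN (N : ℕ) (Λ₁ Λ₂ : Matrix (Fin n) (Fin n) ℝ) :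
    Matrix (Fin n₁) (Fin n) ℝ :=
  (p.HN N Λ₁ Λ₂ - p.EN N Λ₁ Λ₂) * p.Bᵀ * (Λ₁ - (1 / (N : ℝ)) • Λ₂)

/-- Θ₁^N. -/
noncomputable def Theta1N (N : ℕ) (Λ₁ Λ₂ : Matrix (Fin n) (Fin n) ℝ) :
    Matrix (Fin n₁) (Fin n) ℝ :=
  (N : ℝ) • (p.EN N Λ₁ Λ₂ * p.Bᵀ * Λ₁)
    + (p.HN N Λ₁ Λ₂ + ((N : ℝ) - 2) • p.EN N Λ₁ Λ₂) * p.Bᵀ * Λ₂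

/-- Θ₂^N. -/
noncomputable def Theta2N (N : ℕ) (Λ₁ Λ₂ : Matrix (Fin n) (Fin n) ℝ)
    (S : Matrix (Fin n) (Fin 1) ℝ) : Matrix (Fin n₁) (Fin 1) ℝ :=
  (p.HN N Λ₁ Λ₂ + ((N : ℝ) - 1) • p.EN N Λ₁ Λ₂) *
    (p.Bᵀ * S + p.B1ᵀ * Λ₁ * p.D + p.B0ᵀ * (Λ₁ + (1 - 1 / (N : ℝ)) • Λ₂) * p.D0)

/-- Z₀ = −B₀(Θ + Θ₁). -/
noncomputable def Z0 (Λ₁ Λ₂ : Matrix (Fin n) (Fin n) ℝ) : Matrix (Fin n) (Fin n) ℝ :=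
  -(p.B0 * (p.Theta Λ₁ + p.Theta1 Λ₁ Λ₂))

/-- Z₁ = A + G − B(Θ + Θ₁). -/
noncomputable def Z1 (Λ₁ Λ₂ : Matrix (Fin n) (Fin n) ℝ) : Matrix (Fin n) (Fin n) ℝ :=
  p.A + p.G - p.B * (p.Theta Λ₁ + p.Theta1 Λ₁ Λ₂)

/-! The high-dimensional equations under the decentralized control. -/

/-- RHS of (ODE-P̌₁) (paper's −d𝐏̌₁/dt). -/
noncomputable def Pcheck1RHS (N : ℕ) (Θ : Matrix (Fin n₁) (Fin n) ℝ)
    (P1 : Matrix (Fin N × Fin n) (Fin N × Fin n) ℝ) :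
    Matrix (Fin N × Fin n) (Fin N × Fin n) ℝ :=
  (kronIN N Θ)ᵀ * (p.bigR N + p.M2 N ((2 : ℝ) • P1)) * kronIN N Θ
    + P1 * (p.bigA N - p.bigBhat N * kronIN N Θ)
    + (p.bigA N - p.bigBhat N * kronIN N Θ)ᵀ * P1
    + p.bigQ N

/-- Solution of (ODE-P̌₁) on [0,T], with Θ(t) built from Λ₁(t). -/
noncomputable def IsSolPcheck1 (N : ℕ) (Λ₁ : ℝ → Matrix (Fin n) (Fin n) ℝ)
    (P1 : ℝ → Matrix (Fin N × Fin n) (Fin N × Fin n) ℝ) : Prop :=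
  P1 p.T = p.bigQf N ∧
  (∀ t ∈ Icc (0 : ℝ) p.T, ∀ x y, HasDerivWithinAt (fun s => P1 s x y)
    ((-(p.Pcheck1RHS N (p.Theta (Λ₁ t)) (P1 t))) x y) (Icc (0 : ℝ) p.T) t)

/-- RHS of (ODE-P̌₁₂) (paper's −d𝐏̌₁₂/dt). -/
noncomputable def Pcheck12RHS (N : ℕ) (Λ₁m Λ₂m : Matrix (Fin n) (Fin n) ℝ)
    (P1 : Matrix (Fin N × Fin n) (Fin N × Fin n) ℝ)
    (P12 : Matrix (Fin N × Fin n) (Fin n) ℝ) :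
    Matrix (Fin N × Fin n) (Fin n) ℝ :=
  (kronIN N (p.Theta Λ₁m))ᵀ * (p.bigR N + p.M2 N ((2 : ℝ) • P1)) *
      stackN N (p.Theta1 Λ₁m Λ₂m)
    - P1 * p.bigBhat N * stackN N (p.Theta1 Λ₁m Λ₂m)
    + ((p.bigA N)ᵀ - (kronIN N (p.Theta Λ₁m))ᵀ * (p.bigBhat N)ᵀ) * P12
    + P12 * p.Z1 Λ₁m Λ₂m
    - (kronIN N (p.Theta Λ₁m))ᵀ * (p.bigIhat N)ᵀ * (p.bigB0 N)ᵀ * P12 * p.Z0 Λ₁m Λ₂m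

/-- Solution of (ODE-P̌₁₂) on [0,T]. -/
noncomputable def IsSolPcheck12 (N : ℕ) (Λ₁ Λ₂ : ℝ → Matrix (Fin n) (Fin n) ℝ)
    (P1 : ℝ → Matrix (Fin N × Fin n) (Fin N × Fin n) ℝ)
    (P12 : ℝ → Matrix (Fin N × Fin n) (Fin n) ℝ) : Prop :=
  P12 p.T = 0 ∧
  (∀ t ∈ Icc (0 : ℝ) p.T, ∀ x y, HasDerivWithinAt (fun s => P12 s x y)
    ((-(p.Pcheck12RHS N (Λ₁ t) (Λ₂ t) (P1 t) (P12 t))) x y) (Icc (0 : ℝ) p.T) t)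

/-! The decentralized-control low-dimensional coefficient system. -/

/-- ǧ₁. -/
noncomputable def gc1 (N : ℕ) (Θ : Matrix (Fin n₁) (Fin n) ℝ)
    (L1 L2 : Matrix (Fin n) (Fin n) ℝ) : Matrix (Fin n) (Fin n) ℝ :=
  (1 / (N : ℝ)) •
    (Θᵀ * p.B0ᵀ * (L1 + (1 - 1 / (N : ℝ)) • L2) * p.B0 * Θ
      + (L1 + (1 - 1 / (N : ℝ)) • L2) * p.G
      + p.Gᵀ * (L1 + (1 - 1 / (N : ℝ)) • L2)
      + p.QΓ)

/-- ǧ₂. -/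
noncomputable def gc2 (N : ℕ) (Θ : Matrix (Fin n₁) (Fin n) ℝ)
    (L2 : Matrix (Fin n) (Fin n) ℝ) : Matrix (Fin n) (Fin n) ℝ :=
  -((1 / (N : ℝ)) • (Θᵀ * p.B0ᵀ * L2 * p.B0 * Θ + L2 * p.G + p.Gᵀ * L2))

/-- ǧ₁₂. -/
noncomputable def gc12 (N : ℕ) (Θ Θ₁ : Matrix (Fin n₁) (Fin n) ℝ)
    (L2 : Matrix (Fin n) (Fin n) ℝ) : Matrix (Fin n) (Fin n) ℝ :=
  (1 / (N : ℝ)) • (-(Θᵀ * p.B0ᵀ * L2 * p.B0 * Θ₁) + L2 * p.B * Θ₁)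

/-- ǧ₂₂. -/
noncomputable def gc22 (N : ℕ) (Θ₁ : Matrix (Fin n₁) (Fin n) ℝ)
    (L2 : Matrix (Fin n) (Fin n) ℝ) : Matrix (Fin n) (Fin n) ℝ :=
  -((1 / (N : ℝ)) • (Θ₁ᵀ * p.B0ᵀ * L2 * p.B0 * Θ₁))

/-- ǧ₀₁. -/
noncomputable def gc01 (N : ℕ) (Θ : Matrix (Fin n₁) (Fin n) ℝ)
    (Θ₂ : Matrix (Fin n₁) (Fin 1) ℝ) (L2 : Matrix (Fin n) (Fin n) ℝ) :
    Matrix (Fin n) (Fin 1) ℝ :=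
  (1 / (N : ℝ)) • (Θᵀ * p.B0ᵀ * L2 * (p.D0 - p.B0 * Θ₂) + L2 * p.B * Θ₂)

/-- ǧ₀₂. -/
noncomputable def gc02 (N : ℕ) (Θ₁ : Matrix (Fin n₁) (Fin n) ℝ)
    (Θ₂ : Matrix (Fin n₁) (Fin 1) ℝ) (L2 : Matrix (Fin n) (Fin n) ℝ) :
    Matrix (Fin n) (Fin 1) ℝ :=
  (1 / (N : ℝ)) • (-(Θ₁ᵀ * p.B0ᵀ * L2 * p.B0 * Θ₂) + Θ₁ᵀ * p.B0ᵀ * L2 * p.D0)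

/-- RHS of (ODE-Λ̌₁^N) (paper's −dΛ̌₁^N/dt). -/
noncomputable def check1RHS (N : ℕ) (Θ : Matrix (Fin n₁) (Fin n) ℝ)
    (L1 L2 : Matrix (Fin n) (Fin n) ℝ) : Matrix (Fin n) (Fin n) ℝ :=
  Θᵀ * p.R1 L1 * Θ + L1 * (p.A - p.B * Θ) + (p.A - p.B * Θ)ᵀ * L1 + p.Q
    + p.gc1 N Θ L1 L2

/-- RHS of (ODE-Λ̌₂^N). -/
noncomputable def check2RHS (N : ℕ) (Θ : Matrix (Fin n₁) (Fin n) ℝ)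
    (L1 L2 : Matrix (Fin n) (Fin n) ℝ) : Matrix (Fin n) (Fin n) ℝ :=
  Θᵀ * p.B0ᵀ * (L1 + L2) * p.B0 * Θ + L1 * p.G + p.Gᵀ * L1
    + L2 * (p.A + p.G - p.B * Θ) + (p.A + p.G - p.B * Θ)ᵀ * L2 + p.QΓ
    + p.gc2 N Θ L2

/-- RHS of (ODE-Λ̌₁₂^N). -/
noncomputable def check12RHS (N : ℕ) (Θ Θ₁ : Matrix (Fin n₁) (Fin n) ℝ)
    (L1 L2 L12 : Matrix (Fin n) (Fin n) ℝ) : Matrix (Fin n) (Fin n) ℝ :=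
  Θᵀ * p.R2 L1 L2 * Θ₁ + Θᵀ * p.B0ᵀ * L12 * p.B0 * (Θ + Θ₁)
    - (L1 + L2) * p.B * Θ₁
    + (p.A + p.G - p.B * Θ)ᵀ * L12
    + L12 * (p.A + p.G - p.B * (Θ₁ + Θ))
    + p.gc12 N Θ Θ₁ L2

/-- RHS of (ODE-Λ̌₂₂^N). -/
noncomputable def check22RHS (N : ℕ) (Θ₁ : Matrix (Fin n₁) (Fin n) ℝ)
    (Z₀ Z₁ : Matrix (Fin n) (Fin n) ℝ)
    (L1 L2 L12 L22 : Matrix (Fin n) (Fin n) ℝ) : Matrix (Fin n) (Fin n) ℝ :=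
  Θ₁ᵀ * p.R2 L1 L2 * Θ₁ - L12ᵀ * p.B * Θ₁ - Θ₁ᵀ * p.Bᵀ * L12
    + L22 * Z₁ + Z₁ᵀ * L22
    - Z₀ᵀ * L12ᵀ * p.B0 * Θ₁ - Θ₁ᵀ * p.B0ᵀ * L12 * Z₀
    + Z₀ᵀ * L22 * Z₀ + p.gc22 N Θ₁ L2

/-- RHS of (ODE-Š₁^N). -/
noncomputable def checkS1RHS (N : ℕ) (Θ : Matrix (Fin n₁) (Fin n) ℝ)
    (Θ₂ : Matrix (Fin n₁) (Fin 1) ℝ) (L1 L2 L12 : Matrix (Fin n) (Fin n) ℝ)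
    (S1 : Matrix (Fin n) (Fin 1) ℝ) : Matrix (Fin n) (Fin 1) ℝ :=
  Θᵀ * p.R2 L1 L2 * Θ₂ - (L1 + L2 + L12) * p.B * Θ₂
    - Θᵀ * (p.Bᵀ * S1 + p.B1ᵀ * L1 * p.D + p.B0ᵀ * (L1 + L2) * p.D0)
    - Θᵀ * p.B0ᵀ * L12 * (p.D0 - p.B0 * Θ₂)
    + (p.A + p.G)ᵀ * S1
    + p.gc01 N Θ Θ₂ L2

/-- RHS of (ODE-Š₂^N). -/
noncomputable def checkS2RHS (N : ℕ) (Θ₁ : Matrix (Fin n₁) (Fin n) ℝ)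
    (Θ₂ : Matrix (Fin n₁) (Fin 1) ℝ) (Z₀ Z₁ : Matrix (Fin n) (Fin n) ℝ)
    (L1 L2 L12 L22 : Matrix (Fin n) (Fin n) ℝ)
    (S1 S2 : Matrix (Fin n) (Fin 1) ℝ) : Matrix (Fin n) (Fin 1) ℝ :=
  Θ₁ᵀ * p.R2 L1 L2 * Θ₂ + Z₁ᵀ * S2
    - Θ₁ᵀ * (p.Bᵀ * S1 + p.B1ᵀ * L1 * p.D + p.B0ᵀ * (L1 + L2) * p.D0)
    + (Z₀ᵀ * L22 + Z₀ᵀ * L12ᵀ - Θ₁ᵀ * p.B0ᵀ * L12) * (p.D0 - p.B0 * Θ₂)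
    - (L12ᵀ + L22) * p.B * Θ₂
    + p.gc02 N Θ₁ Θ₂ L2

/-- Solution of the pair (ODE-Λ̌₁^N)–(ODE-Λ̌₂^N) on [0,T], with Θ(t) from the limiting Λ₁. -/
noncomputable def IsSolCheckA (N : ℕ) (Λ₁ : ℝ → Matrix (Fin n) (Fin n) ℝ)
    (L1 L2 : ℝ → Matrix (Fin n) (Fin n) ℝ) : Prop :=
  L1 p.T = p.Qf + (1 / (N : ℝ)) • p.QfΓ ∧ L2 p.T = p.QfΓ ∧
  (∀ t ∈ Icc (0 : ℝ) p.T, ∀ i j, HasDerivWithinAt (fun s => L1 s i j)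
    ((-(p.check1RHS N (p.Theta (Λ₁ t)) (L1 t) (L2 t))) i j) (Icc (0 : ℝ) p.T) t) ∧
  (∀ t ∈ Icc (0 : ℝ) p.T, ∀ i j, HasDerivWithinAt (fun s => L2 s i j)
    ((-(p.check2RHS N (p.Theta (Λ₁ t)) (L1 t) (L2 t))) i j) (Icc (0 : ℝ) p.T) t)

/-- Solution of (ODE-Λ̌₁^N)–(ODE-Λ̌₂₂^N) on [0,T], with Θ, Θ₁, Z₀, Z₁ from the limiting (Λ₁, Λ₂). -/
noncomputable def IsSolCheckB (N : ℕ) (Λ₁ Λ₂ : ℝ → Matrix (Fin n) (Fin n) ℝ)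
    (L1 L2 L12 L22 : ℝ → Matrix (Fin n) (Fin n) ℝ) : Prop :=
  p.IsSolCheckA N Λ₁ L1 L2 ∧
  L12 p.T = 0 ∧ L22 p.T = 0 ∧
  (∀ t ∈ Icc (0 : ℝ) p.T, ∀ i j, HasDerivWithinAt (fun s => L12 s i j)
    ((-(p.check12RHS N (p.Theta (Λ₁ t)) (p.Theta1 (Λ₁ t) (Λ₂ t))
        (L1 t) (L2 t) (L12 t))) i j) (Icc (0 : ℝ) p.T) t) ∧
  (∀ t ∈ Icc (0 : ℝ) p.T, ∀ i j, HasDerivWithinAt (fun s => L22 s i j)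
    ((-(p.check22RHS N (p.Theta1 (Λ₁ t) (Λ₂ t)) (p.Z0 (Λ₁ t) (Λ₂ t))
        (p.Z1 (Λ₁ t) (Λ₂ t)) (L1 t) (L2 t) (L12 t) (L22 t))) i j) (Icc (0 : ℝ) p.T) t)

/-- Solution of the full decentralized coefficient system on [0,T],
with Θ, Θ₁, Θ₂, Z₀, Z₁ from the limiting (Λ₁, Λ₂, S). -/
noncomputable def IsSolCheckC (N : ℕ) (Λ₁ Λ₂ : ℝ → Matrix (Fin n) (Fin n) ℝ)
    (S : ℝ → Matrix (Fin n) (Fin 1) ℝ)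
    (L1 L2 L12 L22 : ℝ → Matrix (Fin n) (Fin n) ℝ)
    (S1 S2 : ℝ → Matrix (Fin n) (Fin 1) ℝ) : Prop :=
  p.IsSolCheckB N Λ₁ Λ₂ L1 L2 L12 L22 ∧
  S1 p.T = 0 ∧ S2 p.T = 0 ∧
  (∀ t ∈ Icc (0 : ℝ) p.T, ∀ i j, HasDerivWithinAt (fun s => S1 s i j)
    ((-(p.checkS1RHS N (p.Theta (Λ₁ t)) (p.Theta2 (Λ₁ t) (Λ₂ t) (S t))
        (L1 t) (L2 t) (L12 t) (S1 t))) i j) (Icc (0 : ℝ) p.T) t) ∧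
  (∀ t ∈ Icc (0 : ℝ) p.T, ∀ i j, HasDerivWithinAt (fun s => S2 s i j)
    ((-(p.checkS2RHS N (p.Theta1 (Λ₁ t) (Λ₂ t)) (p.Theta2 (Λ₁ t) (Λ₂ t) (S t))
        (p.Z0 (Λ₁ t) (Λ₂ t)) (p.Z1 (Λ₁ t) (Λ₂ t))
        (L1 t) (L2 t) (L12 t) (L22 t) (S1 t) (S2 t))) i j) (Icc (0 : ℝ) p.T) t)

end Params

end LQ

/-!
(ODE-P̌₁₂) is a linear equation whose coefficients are continuous on `[0, T]`, so its vector
field is Lipschitz uniformly in time: Picard–Lindelöf on steps of fixed length gives a solution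
on all of `[0, T]`, and Gronwall gives uniqueness.

The equal blocks come from exchangeability of the agents. Relabelling the agents by a permutation
`σ` leaves every block coefficient invariant, so conjugating by `σ` maps solutions of (ODE-P̌₁) to
solutions with the same terminal value, and uniqueness makes `𝐏̌₁` invariant. With `𝐏̌₁`
invariant, permuting the block rows maps solutions of (ODE-P̌₁₂) to solutions, so `𝐏̌₁₂` is
invariant under every block-row permutation, i.e. all its blocks agree.
-/

attribute [local instance] Matrix.normedAddCommGroup Matrix.normedSpace

section IntegralCurve

open Metric

variable {E : Type*} [NormedAddCommGroup E] [NormedSpace ℝ E] {v : ℝ → E → E} {a b : ℝ}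

theorem IsIntegralCurveOn.congr {f g : ℝ → E} {s : Set ℝ} (hf : IsIntegralCurveOn f v s)
    (hfg : EqOn g f s) : IsIntegralCurveOn g v s := fun t ht => by
  simpa only [hfg ht] using (hf t ht).congr_of_mem hfg ht

theorem IsIntegralCurveOn.union_of_isClosed {f : ℝ → E} {s s' : Set ℝ} (hs : IsClosed s)
    (hs' : IsClosed s') (hf : IsIntegralCurveOn f v s) (hf' : IsIntegralCurveOn f v s') :
    IsIntegralCurveOn f v (s ∪ s') := by
  -- Away from a closed set, any derivative within it is vacuously correct.
  have extend : ∀ {u : Set ℝ}, IsClosed u → IsIntegralCurveOn f v u →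
      ∀ t, HasDerivWithinAt f (v t (f t)) u t := fun {u} hu hfu t => by
    by_cases ht : t ∈ u
    · exact hfu t ht
    · exact HasFDerivWithinAt.of_notMem_closure (hu.closure_eq.symm ▸ ht)
  exact fun t _ => (extend hs hf t).union (extend hs' hf' t)

theorem IsIntegralCurveOn.ite_lt {f g : ℝ → E} {c : ℝ} (hac : a ≤ c) (hcb : c ≤ b)
    (hg : IsIntegralCurveOn g v (Icc a c)) (hf : IsIntegralCurveOn f v (Icc c b))
    (hc : g c = f c) : IsIntegralCurveOn (fun t => if t < c then g t else f t) v (Icc a b) := by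
  rw [← Icc_union_Icc_eq_Icc hac hcb]
  refine IsIntegralCurveOn.union_of_isClosed isClosed_Icc isClosed_Icc
    (IsIntegralCurveOn.congr hg fun t ht => ?_)
    (IsIntegralCurveOn.congr hf fun t ht => if_neg (not_lt.mpr ht.1))
  rcases ht.2.lt_or_eq with htc | rfl
  · exact if_pos htc
  · simp [hc]

theorem IsIntegralCurveOn.eqOn_Icc_of_lipschitzWith {K : NNReal}
    (hv : ∀ t ∈ Icc a b, LipschitzWith K (v t)) {f g : ℝ → E}
    (hf : IsIntegralCurveOn f v (Icc a b)) (hg : IsIntegralCurveOn g v (Icc a b))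
    (hb : f b = g b) : EqOn f g (Icc a b) := by
  have toIic : ∀ {h : ℝ → E}, IsIntegralCurveOn h v (Icc a b) →
      ∀ t ∈ Ioc a b, HasDerivWithinAt h (v t (h t)) (Iic t) t := fun hh t ht =>
    (hh t (Ioc_subset_Icc_self ht)).mono_of_mem_nhdsWithin <|
      mem_nhdsWithin.mpr ⟨Ioi a, isOpen_Ioi, ht.1, fun y hy => ⟨hy.1.le, hy.2.trans ht.2⟩⟩
  exact ODE_solution_unique_of_mem_Icc_left (s := fun _ => univ)
    (fun t ht => (hv t (Ioc_subset_Icc_self ht)).lipschitzOnWith) hf.continuousOn (toIic hf)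
    (fun _ _ => mem_univ _) hg.continuousOn (toIic hg) (fun _ _ => mem_univ _) hb

theorem IsIntegralCurveOn.comp_eqOn_Icc_of_commute {K : NNReal}
    (hv : ∀ t ∈ Icc a b, LipschitzWith K (v t)) (φ : E →L[ℝ] E)
    (hφ : ∀ t ∈ Icc a b, ∀ x, v t (φ x) = φ (v t x)) {f : ℝ → E}
    (hf : IsIntegralCurveOn f v (Icc a b)) (hb : φ (f b) = f b) :
    EqOn (φ ∘ f) f (Icc a b) :=
  IsIntegralCurveOn.eqOn_Icc_of_lipschitzWith hv
    (fun t ht => by simpa [hφ t ht] using φ.hasFDerivAt.comp_hasDerivWithinAt t (hf t ht)) hf hb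

theorem exists_isIntegralCurveOn_Icc_of_mul_sub_le [CompleteSpace E] {K : NNReal}
    (hv : ∀ t ∈ Icc a b, LipschitzWith K (v t)) (hcont : ∀ x, ContinuousOn (v · x) (Icc a b))
    (hab : a ≤ b) (hK : K * (b - a) ≤ 1 / 2) (x₀ : E) :
    ∃ f : ℝ → E, f b = x₀ ∧ IsIntegralCurveOn f v (Icc a b) := by
  obtain ⟨M, hM⟩ := isCompact_Icc.exists_bound_of_continuousOn (hcont x₀)
  -- On the ball of radius `ρ` the field is bounded by `L = M + K ρ`, and `L (b - a) ≤ ρ`.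
  set ρ : NNReal := ⟨2 * max M 0 * (b - a), by have := le_max_right M 0; positivity⟩
  have hρ : (ρ : ℝ) = 2 * max M 0 * (b - a) := rfl
  set L : NNReal := ⟨max M 0, le_max_right _ _⟩ + K * ρ
  have hL : (L : ℝ) = max M 0 + K * ρ := rfl
  have hpl : IsPicardLindelof v (tmin := a) (tmax := b) ⟨b, hab, le_rfl⟩ x₀ ρ 0 L K := by
    refine ⟨fun t ht => (hv t ht).lipschitzOnWith, fun x _ => hcont x, fun t ht x hx => ?_, ?_⟩
    · have hdist : dist (v t x) (v t x₀) ≤ K * ρ :=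
        ((hv t ht).dist_le_mul x x₀).trans (by gcongr; exact mem_closedBall.mp hx)
      rw [dist_eq_norm] at hdist
      calc ‖v t x‖ ≤ ‖v t x₀‖ + ‖v t x - v t x₀‖ := norm_le_norm_add_norm_sub' _ _
        _ ≤ L := hL ▸ add_le_add ((hM t ht).trans (le_max_left _ _)) hdist
    · rw [sub_self, max_eq_right (sub_nonneg.mpr hab), hL, hρ, NNReal.coe_zero, sub_zero]
      have : 0 ≤ max M 0 * (b - a) := mul_nonneg (le_max_right M 0) (sub_nonneg.mpr hab)
      nlinarith
  exact hpl.exists_eq_forall_mem_Icc_hasDerivWithinAt₀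

theorem exists_isIntegralCurveOn_Icc_of_lipschitzWith [CompleteSpace E] {K : NNReal}
    (hv : ∀ t ∈ Icc a b, LipschitzWith K (v t)) (hcont : ∀ x, ContinuousOn (v · x) (Icc a b))
    (x₀ : E) : ∃ f : ℝ → E, f b = x₀ ∧ IsIntegralCurveOn f v (Icc a b) := by
  rcases lt_or_ge b a with hba | hab
  · exact ⟨fun _ => x₀, rfl, fun t ht => absurd (ht.1.trans ht.2) (not_le.mpr hba)⟩
  set δ : ℝ := 1 / (2 * (K + 1))
  have hδ : 0 < δ := by positivity
  have hKδ : K * δ ≤ 1 / 2 := by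
    rw [mul_one_div, div_le_div_iff₀ (by positivity) two_pos]
    linarith
  have short : ∀ c ∈ Icc a b, ∀ d ∈ Icc c b, d - c ≤ δ → ∀ y : E,
      ∃ f : ℝ → E, f d = y ∧ IsIntegralCurveOn f v (Icc c d) := fun c hc d hd hcd =>
    exists_isIntegralCurveOn_Icc_of_mul_sub_le
      (fun t ht => hv t ⟨hc.1.trans ht.1, ht.2.trans hd.2⟩)
      (fun x => (hcont x).mono (Icc_subset_Icc hc.1 hd.2)) hd.1
      ((mul_le_mul_of_nonneg_left hcd K.2).trans hKδ)
  have steps : ∀ k : ℕ, ∀ c ∈ Icc a b, b - c ≤ k * δ →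
      ∃ f : ℝ → E, f b = x₀ ∧ IsIntegralCurveOn f v (Icc c b) := by
    intro k
    induction k with
    | zero =>
      intro c hc hbc
      rw [Nat.cast_zero, zero_mul] at hbc
      exact short c hc b ⟨hc.2, le_rfl⟩ (by linarith) x₀
    | succ k ih =>
      intro c hc hbc
      push_cast at hbc
      set c' := max c (b - k * δ)
      have hc' : c' ∈ Icc c b := ⟨le_max_left _ _, max_le hc.2 (sub_le_self _ (by positivity))⟩
      obtain ⟨f, hfb, hf⟩ := ih c' ⟨hc.1.trans hc'.1, hc'.2⟩ (sub_le_comm.mp (le_max_right _ _))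
      obtain ⟨g, hgc', hg⟩ := short c hc c' hc'
        (sub_le_iff_le_add'.mpr (max_le (by linarith) (by linarith))) (f c')
      refine ⟨fun t => if t < c' then g t else f t, ?_,
        IsIntegralCurveOn.ite_lt hc'.1 hc'.2 hg hf hgc'⟩
      simp only [if_neg (not_lt.mpr hc'.2), hfb]
  obtain ⟨k, hk⟩ := exists_nat_ge ((b - a) / δ)
  exact steps k a ⟨le_rfl, hab⟩ ((div_le_iff₀ hδ).mp hk)

theorem exists_lipschitzWith_of_isLinearMap_sub [FiniteDimensional ℝ E] {s : Set ℝ}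
    (hs : IsCompact s) (hlin : ∀ t, IsLinearMap ℝ (fun x => v t x - v t 0))
    (hcont : ∀ x, ContinuousOn (v · x) s) : ∃ K : NNReal, ∀ t ∈ s, LipschitzWith K (v t) := by
  set ℓ : ℝ → E →L[ℝ] E := fun t => LinearMap.toContinuousLinearMap (IsLinearMap.mk' _ (hlin t))
  have hℓ : ContinuousOn ℓ s := continuousOn_clm_apply.mpr fun x => (hcont x).sub (hcont 0)
  obtain ⟨C, hC⟩ := hs.exists_bound_of_continuousOn hℓ
  refine ⟨⟨max C 0, le_max_right _ _⟩, fun t ht => LipschitzWith.of_dist_le_mul fun x y => ?_⟩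
  have hxy : v t x - v t y = ℓ t (x - y) := by
    simp only [ℓ, map_sub, LinearMap.coe_toContinuousLinearMap', IsLinearMap.mk'_apply]
    abel
  rw [dist_eq_norm, dist_eq_norm, hxy]
  exact (ℓ t).le_of_opNorm_le ((hC t ht).trans (le_max_left _ _)) _

end IntegralCurve

section MatrixAnalysis

variable {m l : Type*}

theorem Matrix.hasDerivWithinAt_iff [Fintype m] [Fintype l] {f : ℝ → Matrix m l ℝ}
    {f' : Matrix m l ℝ} {s : Set ℝ} {t : ℝ} :
    HasDerivWithinAt f f' s t ↔ ∀ i j, HasDerivWithinAt (f · i j) (f' i j) s t :=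
  hasDerivWithinAt_pi.trans (forall_congr' fun _ => hasDerivWithinAt_pi)

theorem Matrix.isIntegralCurveOn_iff [Fintype m] [Fintype l] {f : ℝ → Matrix m l ℝ}
    {v : ℝ → Matrix m l ℝ → Matrix m l ℝ} {s : Set ℝ} : IsIntegralCurveOn f v s ↔
      ∀ t ∈ s, ∀ i j, HasDerivWithinAt (f · i j) (v t (f t) i j) s t :=
  forall₂_congr fun _ _ => Matrix.hasDerivWithinAt_iff

theorem Matrix.continuousOn_of_hasDerivWithinAt [Fintype m] [Fintype l] {f f' : ℝ → Matrix m l ℝ}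
    {s : Set ℝ} (h : ∀ t ∈ s, ∀ i j, HasDerivWithinAt (f · i j) (f' t i j) s t) :
    ContinuousOn f s :=
  fun t ht => (Matrix.hasDerivWithinAt_iff.mpr (h t ht)).continuousWithinAt

theorem Matrix.submatrix_sum {ι n o α : Type*} [AddCommMonoid α] (s : Finset ι)
    (A : ι → Matrix m n α) (r : l → m) (c : o → n) :
    (∑ i ∈ s, A i).submatrix r c = ∑ i ∈ s, (A i).submatrix r c := by
  ext
  simp [Matrix.sum_apply]

variable {X R : Type*} [TopologicalSpace X] [TopologicalSpace R] {s : Set X}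

@[fun_prop] theorem ContinuousOn.matrix_mul {k : Type*} [Fintype k] [Mul R] [AddCommMonoid R]
    [ContinuousAdd R] [ContinuousMul R] {A : X → Matrix m k R} {B : X → Matrix k l R}
    (hA : ContinuousOn A s) (hB : ContinuousOn B s) : ContinuousOn (fun x => A x * B x) s := by
  rw [continuousOn_iff_continuous_domRestrict] at *
  exact hA.matrix_mul hB

@[fun_prop] theorem ContinuousOn.matrix_transpose {A : X → Matrix m l R} (hA : ContinuousOn A s) :
    ContinuousOn (fun x => (A x)ᵀ) s :=
  continuous_id.matrix_transpose.comp_continuousOn hA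

theorem ContinuousOn.matrix_inv [Field R] [IsTopologicalDivisionRing R] [Fintype m]
    [DecidableEq m] {A : X → Matrix m m R} (hA : ContinuousOn A s)
    (hdet : ∀ x ∈ s, (A x).det ≠ 0) : ContinuousOn (fun x => (A x)⁻¹) s := by
  simp only [Matrix.inv_def, Ring.inverse_eq_inv']
  exact ((continuous_id.matrix_det.comp_continuousOn hA).inv₀ hdet).smul
    (continuous_id.matrix_adjugate.comp_continuousOn hA)

end MatrixAnalysis

namespace LQ

open Matrix

section BlockPerm

variable {N : ℕ} (σ : Equiv.Perm (Fin N))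

/-- Relabelling of the agents by `σ`, acting on the block index of `Fin N × Fin a`. -/
def blockPerm (a : ℕ) : Equiv.Perm (Fin N × Fin a) :=
  σ.prodCongr (Equiv.refl _)

@[simp] lemma blockPerm_apply {a : ℕ} (x : Fin N × Fin a) : blockPerm σ a x = (σ x.1, x.2) :=
  rfl

lemma kronIN_submatrix_blockPerm {a b : ℕ} (M : Matrix (Fin a) (Fin b) ℝ) :
    (kronIN N M).submatrix (blockPerm σ a) (blockPerm σ b) = kronIN N M := by
  ext; simp [kronIN]

lemma stackN_submatrix_blockPerm {a b : ℕ} (M : Matrix (Fin a) (Fin b) ℝ) :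
    (stackN N M).submatrix (blockPerm σ a) id = stackN N M := by
  ext; simp [stackN]

end BlockPerm

@[fun_prop] lemma continuous_kronIN {N a b : ℕ} :
    Continuous (kronIN N : Matrix (Fin a) (Fin b) ℝ → _) :=
  continuous_matrix fun x y => by
    by_cases h : x.1 = y.1 <;> simp only [kronIN, of_apply, h, if_true, if_false] <;> fun_prop

@[fun_prop] lemma continuous_stackN {N a b : ℕ} :
    Continuous (stackN N : Matrix (Fin a) (Fin b) ℝ → _) :=
  continuous_matrix fun x y => by simp only [stackN, of_apply]; fun_prop

namespace Params

variable {n n₁ N : ℕ} (p : Params n n₁)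

section M2

lemma M2_add (Z W : Matrix (Fin N × Fin n) (Fin N × Fin n) ℝ) :
    p.M2 N (Z + W) = p.M2 N Z + p.M2 N W := by
  simp only [M2, Matrix.mul_add, Matrix.add_mul, Finset.sum_add_distrib, smul_add]
  abel

lemma M2_smul (c : ℝ) (Z : Matrix (Fin N × Fin n) (Fin N × Fin n) ℝ) :
    p.M2 N (c • Z) = c • p.M2 N Z := by
  simp only [M2, Matrix.mul_smul, Matrix.smul_mul, ← Finset.smul_sum, smul_add, smul_comm c]

lemma M2_zero : p.M2 N 0 = 0 := by
  simpa using p.M2_smul 0 0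

@[fun_prop] lemma continuous_M2 : Continuous (p.M2 N) := by
  unfold M2
  fun_prop

end M2

section BlockPerm

variable (σ : Equiv.Perm (Fin N))

lemma bigA_submatrix_blockPerm :
    (p.bigA N).submatrix (blockPerm σ n) (blockPerm σ n) = p.bigA N := by
  ext; simp [bigA]

lemma bigQ_submatrix_blockPerm :
    (p.bigQ N).submatrix (blockPerm σ n) (blockPerm σ n) = p.bigQ N := by
  ext; simp [bigQ]

lemma bigQf_submatrix_blockPerm :
    (p.bigQf N).submatrix (blockPerm σ n) (blockPerm σ n) = p.bigQf N := by
  ext; simp [bigQf]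

lemma bigR_submatrix_blockPerm :
    (p.bigR N).submatrix (blockPerm σ n₁) (blockPerm σ n₁) = p.bigR N := by
  ext; simp [bigR]

lemma bigBhat_submatrix_blockPerm :
    (p.bigBhat N).submatrix (blockPerm σ n) (blockPerm σ n₁) = p.bigBhat N := by
  ext; simp [bigBhat]

lemma bigB0_submatrix_blockPerm : (p.bigB0 N).submatrix (blockPerm σ n) id = p.bigB0 N := by
  ext; simp [bigB0]

lemma bigIhat_submatrix_blockPerm :
    (p.bigIhat N).submatrix id (blockPerm σ n₁) = p.bigIhat N := by
  ext; simp [bigIhat]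

lemma bigB_submatrix_blockPerm (i : Fin N) :
    (p.bigB N i).submatrix (blockPerm σ n) id = p.bigB N (σ.symm i) := by
  ext; simp [bigB, ← Equiv.eq_symm_apply]

lemma bigE_submatrix_blockPerm (i : Fin N) :
    (p.bigE N i).submatrix id (blockPerm σ n₁) = p.bigE N (σ.symm i) := by
  ext; simp [bigE, ← Equiv.eq_symm_apply]

/- The proofs below push `submatrix` inwards through every product, choosing the reindexing of
the inner index from its type, until only invariant coefficients are left. -/

lemma M2_submatrix_blockPerm (Z : Matrix (Fin N × Fin n) (Fin N × Fin n) ℝ) :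
    (p.M2 N Z).submatrix (blockPerm σ n₁) (blockPerm σ n₁)
      = p.M2 N (Z.submatrix (blockPerm σ n) (blockPerm σ n)) := by
  simp only [M2, submatrix_add, submatrix_smul, Pi.add_apply, Pi.smul_apply, submatrix_sum,
    ← submatrix_mul_equiv _ _ _ (blockPerm σ n) _,
    ← submatrix_mul_equiv _ _ _ (Equiv.refl (Fin n₁)) _, Equiv.coe_refl, ← transpose_submatrix,
    bigE_submatrix_blockPerm, bigB_submatrix_blockPerm, bigIhat_submatrix_blockPerm,
    bigB0_submatrix_blockPerm]
  rw [Equiv.sum_comp σ.symm (fun i => (p.bigE N i)ᵀ * (p.bigB N i)ᵀ *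
    Z.submatrix (blockPerm σ n) (blockPerm σ n) * p.bigB N i * p.bigE N i)]

lemma Pcheck1RHS_submatrix_blockPerm (Θ : Matrix (Fin n₁) (Fin n) ℝ)
    (Z : Matrix (Fin N × Fin n) (Fin N × Fin n) ℝ) :
    (p.Pcheck1RHS N Θ Z).submatrix (blockPerm σ n) (blockPerm σ n)
      = p.Pcheck1RHS N Θ (Z.submatrix (blockPerm σ n) (blockPerm σ n)) := by
  simp only [Pcheck1RHS, submatrix_add, submatrix_sub, submatrix_smul, Pi.add_apply,
    Pi.sub_apply, Pi.smul_apply, ← submatrix_mul_equiv _ _ _ (blockPerm σ n) _,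
    ← submatrix_mul_equiv _ _ _ (blockPerm σ n₁) _, ← transpose_submatrix,
    kronIN_submatrix_blockPerm, bigR_submatrix_blockPerm, M2_submatrix_blockPerm,
    bigA_submatrix_blockPerm, bigBhat_submatrix_blockPerm, bigQ_submatrix_blockPerm]

lemma Pcheck12RHS_submatrix_blockPerm (Λ₁ Λ₂ : Matrix (Fin n) (Fin n) ℝ)
    (Z : Matrix (Fin N × Fin n) (Fin N × Fin n) ℝ) (X : Matrix (Fin N × Fin n) (Fin n) ℝ) :
    (p.Pcheck12RHS N Λ₁ Λ₂ Z X).submatrix (blockPerm σ n) id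
      = p.Pcheck12RHS N Λ₁ Λ₂ (Z.submatrix (blockPerm σ n) (blockPerm σ n))
          (X.submatrix (blockPerm σ n) id) := by
  simp only [Pcheck12RHS, submatrix_add, submatrix_sub, submatrix_smul, Pi.add_apply,
    Pi.sub_apply, Pi.smul_apply, ← submatrix_mul_equiv _ _ _ (blockPerm σ n) _,
    ← submatrix_mul_equiv _ _ _ (blockPerm σ n₁) _,
    ← submatrix_mul_equiv _ _ _ (Equiv.refl (Fin n)) _,
    ← submatrix_mul_equiv _ _ _ (Equiv.refl (Fin n₁)) _, Equiv.coe_refl, submatrix_id_id,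
    ← transpose_submatrix, kronIN_submatrix_blockPerm, stackN_submatrix_blockPerm,
    bigR_submatrix_blockPerm, M2_submatrix_blockPerm, bigA_submatrix_blockPerm,
    bigBhat_submatrix_blockPerm, bigB0_submatrix_blockPerm, bigIhat_submatrix_blockPerm]

end BlockPerm

/-- The vector field of (ODE-P̌₁), whose right-hand side `Pcheck1RHS` is `-d𝐏̌₁/dt`. -/
noncomputable def pcheck1Field (N : ℕ) (Λ₁ : ℝ → Matrix (Fin n) (Fin n) ℝ) (t : ℝ)
    (X : Matrix (Fin N × Fin n) (Fin N × Fin n) ℝ) : Matrix (Fin N × Fin n) (Fin N × Fin n) ℝ :=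
  -p.Pcheck1RHS N (p.Theta (Λ₁ t)) X

/-- The vector field of (ODE-P̌₁₂), whose right-hand side `Pcheck12RHS` is `-d𝐏̌₁₂/dt`. -/
noncomputable def pcheck12Field (N : ℕ) (Λ₁ Λ₂ : ℝ → Matrix (Fin n) (Fin n) ℝ)
    (P1 : ℝ → Matrix (Fin N × Fin n) (Fin N × Fin n) ℝ) (t : ℝ)
    (X : Matrix (Fin N × Fin n) (Fin n) ℝ) : Matrix (Fin N × Fin n) (Fin n) ℝ :=
  -p.Pcheck12RHS N (Λ₁ t) (Λ₂ t) (P1 t) X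

variable {p} {Λ₁ Λ₂ : ℝ → Matrix (Fin n) (Fin n) ℝ}
  {P1 : ℝ → Matrix (Fin N × Fin n) (Fin N × Fin n) ℝ}

lemma isSolPcheck1_iff : p.IsSolPcheck1 N Λ₁ P1 ↔
    P1 p.T = p.bigQf N ∧ IsIntegralCurveOn P1 (p.pcheck1Field N Λ₁) (Icc 0 p.T) := by
  rw [Matrix.isIntegralCurveOn_iff]
  rfl

lemma isSolPcheck12_iff {P12 : ℝ → Matrix (Fin N × Fin n) (Fin n) ℝ} :
    p.IsSolPcheck12 N Λ₁ Λ₂ P1 P12 ↔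
      P12 p.T = 0 ∧ IsIntegralCurveOn P12 (p.pcheck12Field N Λ₁ Λ₂ P1) (Icc 0 p.T) := by
  rw [Matrix.isIntegralCurveOn_iff]
  rfl

lemma isLinearMap_pcheck1Field_sub (t : ℝ) :
    IsLinearMap ℝ fun X => p.pcheck1Field N Λ₁ t X - p.pcheck1Field N Λ₁ t 0 := by
  constructor <;> intros <;>
    simp only [pcheck1Field, Pcheck1RHS, smul_zero, smul_add, p.M2_add, p.M2_smul, p.M2_zero,
      Matrix.mul_add, Matrix.add_mul, Matrix.mul_smul, Matrix.smul_mul, Matrix.zero_mul,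
      Matrix.mul_zero] <;>
    module

lemma isLinearMap_pcheck12Field_sub (t : ℝ) :
    IsLinearMap ℝ fun X => p.pcheck12Field N Λ₁ Λ₂ P1 t X - p.pcheck12Field N Λ₁ Λ₂ P1 t 0 := by
  constructor <;> intros <;>
    simp only [pcheck12Field, Pcheck12RHS, Matrix.mul_add, Matrix.add_mul, Matrix.mul_smul,
      Matrix.smul_mul, Matrix.zero_mul, Matrix.mul_zero] <;>
    module

section Continuity

variable {s : Set ℝ}

lemma continuousOn_pcheck1Field (hΘ : ContinuousOn (fun t => p.Theta (Λ₁ t)) s)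
    (X : Matrix (Fin N × Fin n) (Fin N × Fin n) ℝ) :
    ContinuousOn (p.pcheck1Field N Λ₁ · X) s := by
  have hk : ContinuousOn (fun t => kronIN N (p.Theta (Λ₁ t))) s :=
    continuous_kronIN.comp_continuousOn hΘ
  unfold pcheck1Field Pcheck1RHS
  fun_prop

lemma continuousOn_pcheck12Field (hΘ : ContinuousOn (fun t => p.Theta (Λ₁ t)) s)
    (hΘ₁ : ContinuousOn (fun t => p.Theta1 (Λ₁ t) (Λ₂ t)) s) (hP1 : ContinuousOn P1 s)
    (X : Matrix (Fin N × Fin n) (Fin n) ℝ) :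
    ContinuousOn (p.pcheck12Field N Λ₁ Λ₂ P1 · X) s := by
  have hk : ContinuousOn (fun t => kronIN N (p.Theta (Λ₁ t))) s :=
    continuous_kronIN.comp_continuousOn hΘ
  have hs : ContinuousOn (fun t => stackN N (p.Theta1 (Λ₁ t) (Λ₂ t))) s :=
    continuous_stackN.comp_continuousOn hΘ₁
  have hM : ContinuousOn (fun t => p.M2 N ((2 : ℝ) • P1 t)) s := by fun_prop
  have hZ0 : ContinuousOn (fun t => p.Z0 (Λ₁ t) (Λ₂ t)) s := by unfold Z0; fun_prop
  have hZ1 : ContinuousOn (fun t => p.Z1 (Λ₁ t) (Λ₂ t)) s := by unfold Z1; fun_prop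
  unfold pcheck12Field Pcheck12RHS
  fun_prop

lemma IsSolLim.continuousOn_Theta (h : p.IsSolLim Λ₁ Λ₂) :
    ContinuousOn (fun t => p.Theta (Λ₁ t)) (Icc 0 p.T) := by
  have hΛ₁ := Matrix.continuousOn_of_hasDerivWithinAt h.2.2.2.2.1
  have hR1 : ContinuousOn (fun t => (p.R1 (Λ₁ t))⁻¹) (Icc 0 p.T) :=
    ContinuousOn.matrix_inv (by unfold R1; fun_prop) fun t ht => (h.2.1 t ht).1.det_pos.ne'
  exact (hR1.matrix_mul continuousOn_const).matrix_mul hΛ₁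

lemma IsSolLim.continuousOn_Theta1 (h : p.IsSolLim Λ₁ Λ₂) :
    ContinuousOn (fun t => p.Theta1 (Λ₁ t) (Λ₂ t)) (Icc 0 p.T) := by
  have hΛ₁ := Matrix.continuousOn_of_hasDerivWithinAt h.2.2.2.2.1
  have hΛ₂ := Matrix.continuousOn_of_hasDerivWithinAt h.2.2.2.2.2
  have hR1 : ContinuousOn (fun t => (p.R1 (Λ₁ t))⁻¹) (Icc 0 p.T) :=
    ContinuousOn.matrix_inv (by unfold R1; fun_prop) fun t ht => (h.2.1 t ht).1.det_pos.ne'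
  have hR2 : ContinuousOn (fun t => (p.R2 (Λ₁ t) (Λ₂ t))⁻¹) (Icc 0 p.T) :=
    ContinuousOn.matrix_inv (by unfold R2; fun_prop) fun t ht => (h.2.1 t ht).2.det_pos.ne'
  unfold Theta1
  fun_prop

end Continuity

lemma IsSolPcheck1.submatrix_blockPerm (hΘ : ContinuousOn (fun t => p.Theta (Λ₁ t)) (Icc 0 p.T))
    (hP1 : p.IsSolPcheck1 N Λ₁ P1) (σ : Equiv.Perm (Fin N)) :
    ∀ t ∈ Icc 0 p.T, (P1 t).submatrix (blockPerm σ n) (blockPerm σ n) = P1 t := by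
  rw [isSolPcheck1_iff] at hP1
  obtain ⟨K, hK⟩ := exists_lipschitzWith_of_isLinearMap_sub isCompact_Icc
    isLinearMap_pcheck1Field_sub (continuousOn_pcheck1Field hΘ)
  let conj : Matrix (Fin N × Fin n) (Fin N × Fin n) ℝ →ₗ[ℝ] _ :=
    ⟨⟨fun X => X.submatrix (blockPerm σ n) (blockPerm σ n), fun _ _ => rfl⟩, fun _ _ => rfl⟩
  refine IsIntegralCurveOn.comp_eqOn_Icc_of_commute hK (LinearMap.toContinuousLinearMap conj)
    (fun t _ X => ?_) hP1.2 ?_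
  · exact (congrArg Neg.neg (p.Pcheck1RHS_submatrix_blockPerm σ _ X)).symm
  · exact hP1.1.symm ▸ p.bigQf_submatrix_blockPerm σ

lemma pcheck12Field_submatrix_blockPerm (σ : Equiv.Perm (Fin N)) {t : ℝ}
    (hP1 : (P1 t).submatrix (blockPerm σ n) (blockPerm σ n) = P1 t)
    (X : Matrix (Fin N × Fin n) (Fin n) ℝ) :
    p.pcheck12Field N Λ₁ Λ₂ P1 t (X.submatrix (blockPerm σ n) id)
      = (p.pcheck12Field N Λ₁ Λ₂ P1 t X).submatrix (blockPerm σ n) id := by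
  rw [pcheck12Field, pcheck12Field, ← hP1, ← Pcheck12RHS_submatrix_blockPerm, hP1]
  rfl

end Params

theorem solPcheck12_exists_unique_equal_blocks_general {n n₁ : ℕ} (p : Params n n₁)
    (Λ₁ Λ₂ : ℝ → Matrix (Fin n) (Fin n) ℝ)
    (hLim : p.IsSolLim Λ₁ Λ₂) :
    ∀ N : ℕ, 1 ≤ N →
      ∀ P1 : ℝ → Matrix (Fin N × Fin n) (Fin N × Fin n) ℝ,
        p.IsSolPcheck1 N Λ₁ P1 →
        ∃ P12 : ℝ → Matrix (Fin N × Fin n) (Fin n) ℝ,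
          p.IsSolPcheck12 N Λ₁ Λ₂ P1 P12 ∧
          (∀ P12' : ℝ → Matrix (Fin N × Fin n) (Fin n) ℝ,
            p.IsSolPcheck12 N Λ₁ Λ₂ P1 P12' →
            ∀ t ∈ Icc (0 : ℝ) p.T, P12' t = P12 t) ∧
          ∃ Pi12 : ℝ → Matrix (Fin n) (Fin n) ℝ,
            ∀ t ∈ Icc (0 : ℝ) p.T, ∀ (i : Fin N) (k l : Fin n),
              P12 t (i, k) l = Pi12 t k l := by
  intro N hN P1 hP1
  have hΘ := hLim.continuousOn_Theta
  have hv := Params.continuousOn_pcheck12Field hΘ hLim.continuousOn_Theta1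
    (Params.isSolPcheck1_iff.mp hP1).2.continuousOn
  obtain ⟨K, hK⟩ := exists_lipschitzWith_of_isLinearMap_sub isCompact_Icc
    Params.isLinearMap_pcheck12Field_sub hv
  obtain ⟨P12, hP12T, hP12⟩ := exists_isIntegralCurveOn_Icc_of_lipschitzWith hK hv 0
  have hrows : ∀ σ : Equiv.Perm (Fin N), ∀ t ∈ Icc 0 p.T,
      (P12 t).submatrix (blockPerm σ n) id = P12 t := fun σ =>
    IsIntegralCurveOn.comp_eqOn_Icc_of_commute hK (LinearMap.toContinuousLinearMap
      ⟨⟨fun X => X.submatrix (blockPerm σ n) id, fun _ _ => rfl⟩, fun _ _ => rfl⟩)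
      (fun t ht X =>
        Params.pcheck12Field_submatrix_blockPerm σ (hP1.submatrix_blockPerm hΘ σ t ht) X)
      hP12 (by rw [hP12T]; rfl)
  refine ⟨P12, Params.isSolPcheck12_iff.mpr ⟨hP12T, hP12⟩, fun P12' h' => ?_,
    fun t k l => P12 t (⟨0, hN⟩, k) l, fun t ht i k l => ?_⟩
  · exact IsIntegralCurveOn.eqOn_Icc_of_lipschitzWith hK (Params.isSolPcheck12_iff.mp h').2 hP12
      (h'.1.trans hP12T.symm)
  · simpa using congrFun (congrFun (hrows (Equiv.swap i ⟨0, hN⟩) t ht) (⟨0, hN⟩, k)) l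

/-- the linear terminal value problem (ODE-P̌₁₂) has a unique solution on
[0,T], all of whose N blocks are equal. -/
theorem solPcheck12_exists_unique_equal_blocks {n n₁ : ℕ} (p : Params n n₁)
    (hp : p.Standing) (Λ₁ Λ₂ : ℝ → Matrix (Fin n) (Fin n) ℝ)
    (S : ℝ → Matrix (Fin n) (Fin 1) ℝ) (r : ℝ → ℝ)
    (hLim : p.IsSolLim Λ₁ Λ₂) (hSr : p.IsSolSr Λ₁ Λ₂ S r) :
    ∀ N : ℕ, 1 ≤ N →
      ∀ P1 : ℝ → Matrix (Fin N × Fin n) (Fin N × Fin n) ℝ,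
        p.IsSolPcheck1 N Λ₁ P1 →
        ∃ P12 : ℝ → Matrix (Fin N × Fin n) (Fin n) ℝ,
          p.IsSolPcheck12 N Λ₁ Λ₂ P1 P12 ∧
          (∀ P12' : ℝ → Matrix (Fin N × Fin n) (Fin n) ℝ,
            p.IsSolPcheck12 N Λ₁ Λ₂ P1 P12' →
            ∀ t ∈ Icc (0 : ℝ) p.T, P12' t = P12 t) ∧
          ∃ Pi12 : ℝ → Matrix (Fin n) (Fin n) ℝ,
            ∀ t ∈ Icc (0 : ℝ) p.T, ∀ (i : Fin N) (k l : Fin n),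
              P12 t (i, k) l = Pi12 t k l :=
  solPcheck12_exists_unique_equal_blocks_general p Λ₁ Λ₂ hLim

end LQ
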